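/- A meromorphic function f : D → ℂ∪{∞} is normal along a simple curve γ (ending at a boundary point) if and only if it is normal along every curve γ₁ in the equivalence class [γ] (where γ₁ ∼ γ means γ₁ ⊆ Δ_r γ for some r). -/

import Mathlib

open Complex Set Filter Topology

noncomputable section

def unitDisc : Set ℂ := {z : ℂ | ‖z‖ < 1}

def dph (z w : ℂ) : ℝ := ‖(z - w) / (1 - z * (starRingEnd ℂ) w)‖

def dhyp (z w : ℂ) : ℝ := Real.log ((1 + dph z w) / (1 - dph z w))

def phiM (w z : ℂ) : ℂ := (z + w) / (1 + z * (starRingEnd ℂ) w)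

/-- The spherical (chordal) metric on the Riemann sphere `OnePoint ℂ`. -/
def sphDist : OnePoint ℂ → OnePoint ℂ → ℝ
  | Option.some z, Option.some w =>
      2 * ‖z - w‖ /
        (Real.sqrt (1 + ‖z‖ ^ 2) * Real.sqrt (1 + ‖w‖ ^ 2))
  | Option.some z, Option.none => 2 / Real.sqrt (1 + ‖z‖ ^ 2)
  | Option.none, Option.some w => 2 / Real.sqrt (1 + ‖w‖ ^ 2)
  | Option.none, Option.none => 0

/-- Curvilinear angle along `γ` with pseudo-hyperbolic deflection `r`. -/
def Delta (r : ℝ) (γ : Set ℂ) : Set ℂ := ⋃ w ∈ γ, {z ∈ unitDisc | dph z w ≤ r}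

/-- A simple curve in the unit disc terminating at the boundary point `p`. -/
structure SimpleCurve (p : ℂ) where
  toFun : ℝ → ℂ
  cont : ContinuousOn toFun (Set.Ico 0 1)
  inj : Set.InjOn toFun (Set.Ico 0 1)
  inDisc : ∀ t ∈ Set.Ico (0:ℝ) 1, toFun t ∈ unitDisc
  tends : Filter.Tendsto toFun (nhdsWithin 1 (Set.Ico 0 1)) (nhds p)

def SimpleCurve.carrier {p : ℂ} (γ : SimpleCurve p) : Set ℂ := γ.toFun '' Set.Ico 0 1

/-- The family `{f ∘ φ_w : w ∈ γ}` is normal on `U`: every sequence admits a subsequence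
converging uniformly on compact subsets of `U` in the spherical metric. -/
def NormalAlong (f : ℂ → OnePoint ℂ) (γ : Set ℂ) (U : Set ℂ) : Prop :=
  ∀ w : ℕ → ℂ, (∀ n, w n ∈ γ) →
    ∃ φ : ℕ → ℕ, StrictMono φ ∧ ∃ h : ℂ → OnePoint ℂ,
      ∀ K : Set ℂ, K ⊆ U → IsCompact K → ∀ ε > 0, ∃ N, ∀ n ≥ N, ∀ z ∈ K,
        sphDist (f (phiM (w (φ n)) z)) (h z) < ε

-- The Riemann-sphere-valued extension of a meromorphic function: at poles the value is ∞.
open scoped Classical in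
def toSphere (f : ℂ → ℂ) (z : ℂ) : OnePoint ℂ :=
  if AnalyticAt ℂ f z then (f z : OnePoint ℂ) else (OnePoint.infty : OnePoint ℂ)

-- The spherical derivative |f'|/(1+|f|²), extended at poles via 1/f.
open scoped Classical in
def sphDeriv (f : ℂ → ℂ) (z : ℂ) : ℝ :=
  if AnalyticAt ℂ f z then ‖deriv f z‖ / (1 + ‖f z‖ ^ 2)
  else ‖deriv (fun w => (f w)⁻¹) z‖ / (1 + ‖(f z)⁻¹‖ ^ 2)

/-!
For `u, w` in the disc, `φ_u = φ_w ∘ ψ` with `ψ(z) = φ_b(λ z)`, `|λ| = 1` and `|b| = d_ph(u, w)`.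
So if every point of `γ₁` lies within pseudo-hyperbolic distance `r < 1` of `γ`, each map
`f ∘ φ_u`, `u ∈ γ₁`, is some `f ∘ φ_w`, `w ∈ γ`, precomposed with an automorphism from a compact
family. Passing to subsequences along which both `f ∘ φ_w` and the parameters `(λ, b)` converge
gives locally uniform convergence of `f ∘ φ_u`, as long as the limits are continuous, i.e. as long
as the spherical extension `toSphere f` is continuous on the disc.

That extension is continuous at regular points and at poles of `f`, but it sends a removable
singularity at which `f` is not analytic to `∞`. In that case `f` is normal along no curve at all:
moving the preimage of the bad point slightly along an accumulation point of the curve forces a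
locally uniform limit to take a value close both to `∞` and to the finite limit of `f` there.
-/

open ComplexConjugate
open scoped OnePoint

lemma tendstoUniformlyOn_of_continuousOn_prod {α β E ι : Type*} [TopologicalSpace α]
    [TopologicalSpace β] [UniformSpace E] {l : Filter ι} {f : α → β → E} {S : Set α} {K : Set β}
    (hK : IsCompact K) (hf : ContinuousOn (Function.uncurry f) (S ×ˢ K)) {p : ι → α} {q : α}
    (hq : q ∈ S) (hp : Tendsto p l (𝓝[S] q)) :
    TendstoUniformlyOn (fun n => f (p n)) (f q) l K := fun _u hu =>
  let ⟨_v, hv, hvu⟩ := hK.mem_uniformity_of_prod hf hq (symm_le_uniformity hu)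
  hp.eventually (mem_of_superset hv hvu)

lemma TendstoUniformlyOn.comp_of_mapsTo {α β E ι : Type*} [PseudoMetricSpace E] {l : Filter ι}
    {G : ι → β → E} {g : β → E} {ψ : ι → α → β} {ψ₀ : α → β} {K : Set α} {K' : Set β}
    (hG : TendstoUniformlyOn G g l K') (hψ : ∀ n, MapsTo (ψ n) K K')
    (hgψ : TendstoUniformlyOn (fun n => g ∘ ψ n) (g ∘ ψ₀) l K) :
    TendstoUniformlyOn (fun n => G n ∘ ψ n) (g ∘ ψ₀) l K := by
  rw [Metric.tendstoUniformlyOn_iff] at *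
  intro ε hε
  filter_upwards [hG (ε / 2) (half_pos hε), hgψ (ε / 2) (half_pos hε)] with n hGn hgψn z hz
  calc dist (g (ψ₀ z)) (G n (ψ n z))
      ≤ dist (g (ψ₀ z)) (g (ψ n z)) + dist (g (ψ n z)) (G n (ψ n z)) := dist_triangle _ _ _
    _ < ε / 2 + ε / 2 := add_lt_add (hgψn z hz) (hGn _ (hψ n hz))
    _ = ε := add_halves ε

-- Inverse stereographic projection onto the unit sphere of `ℝ³`.
def stereoInv : OnePoint ℂ → EuclideanSpace ℝ (Fin 3)
  | Option.some z => (1 + ‖z‖ ^ 2)⁻¹ • !₂[2 * z.re, 2 * z.im, ‖z‖ ^ 2 - 1]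
  | Option.none => !₂[0, 0, 1]

lemma sphDist_eq_dist (x y : OnePoint ℂ) : sphDist x y = dist (stereoInv x) (stereoInv y) := by
  have hn (z : ℂ) : ‖z‖ ^ 2 = z.re ^ 2 + z.im ^ 2 := by
    rw [Complex.sq_norm, Complex.normSq_apply]; ring
  rcases x with _ | z <;> rcases y with _ | w
  · simp [sphDist, stereoInv]
  all_goals
    simp only [sphDist, stereoInv, EuclideanSpace.dist_eq, Fin.sum_univ_three, Real.dist_eq, sq_abs,
      PiLp.smul_apply, smul_eq_mul, Matrix.cons_val_zero, Matrix.cons_val_one,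
      Matrix.cons_val_two, Matrix.head_cons, Matrix.tail_cons]
    rw [eq_comm, Real.sqrt_eq_iff_eq_sq (by positivity) (by positivity)]
    simp only [div_pow, mul_pow, Real.sq_sqrt (by positivity : (0 : ℝ) ≤ 1 + ‖_‖ ^ 2)]
    simp only [hn, Complex.sub_re, Complex.sub_im]
    field_simp
    ring

lemma dist_stereoInv_coe_infty (z : ℂ) : dist (stereoInv z) (stereoInv ∞) = 2 / √(1 + ‖z‖ ^ 2) :=
  (sphDist_eq_dist z ∞).symm

lemma stereoInv_coe_ne_infty (z : ℂ) : stereoInv z ≠ stereoInv ∞ := by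
  rw [← dist_pos, dist_stereoInv_coe_infty]
  positivity

lemma lipschitzWith_stereoInv_coe : LipschitzWith 2 (fun z : ℂ => stereoInv z) := by
  refine LipschitzWith.of_dist_le_mul fun z w => ?_
  rw [← sphDist_eq_dist, dist_eq_norm]
  refine div_le_self (by positivity) ?_
  have one_le (a : ℂ) : 1 ≤ √(1 + ‖a‖ ^ 2) := Real.one_le_sqrt.2 (by nlinarith [norm_nonneg a])
  nlinarith [one_le z, one_le w]

lemma tendsto_stereoInv_coe_cobounded :
    Tendsto (fun z : ℂ => stereoInv z) (Bornology.cobounded ℂ) (𝓝 (stereoInv ∞)) := by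
  rw [tendsto_iff_dist_tendsto_zero]
  simp only [dist_stereoInv_coe_infty]
  refine tendsto_const_nhds.div_atTop (Real.tendsto_sqrt_atTop.comp ?_)
  exact tendsto_atTop_add_const_left _ _
    ((tendsto_pow_atTop two_ne_zero).comp tendsto_norm_cobounded_atTop)

lemma toSphere_of_analyticAt {f : ℂ → ℂ} {z : ℂ} (h : AnalyticAt ℂ f z) : toSphere f z = f z :=
  if_pos h

lemma toSphere_of_not_analyticAt {f : ℂ → ℂ} {z : ℂ} (h : ¬ AnalyticAt ℂ f z) :
    toSphere f z = ∞ :=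
  if_neg h

lemma MeromorphicAt.toSphere_eventuallyEq {f : ℂ → ℂ} {s : ℂ} (hf : MeromorphicAt f s) :
    toSphere f =ᶠ[𝓝[≠] s] fun y => (f y : OnePoint ℂ) :=
  hf.eventually_analyticAt.mono fun _ => toSphere_of_analyticAt

lemma MeromorphicAt.continuousAt_stereoInv_toSphere {f : ℂ → ℂ} {s : ℂ} (hf : MeromorphicAt f s)
    (hs : AnalyticAt ℂ f s ∨ meromorphicOrderAt f s < 0) :
    ContinuousAt (stereoInv ∘ toSphere f) s := by
  rcases hs with hs | hs
  · have heq : toSphere f =ᶠ[𝓝 s] fun y => (f y : OnePoint ℂ) :=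
      hs.eventually_analyticAt.mono fun _ => toSphere_of_analyticAt
    exact (lipschitzWith_stereoInv_coe.continuous.continuousAt.comp hs.continuousAt).congr
      (heq.fun_comp stereoInv).symm
  · have hna : ¬ AnalyticAt ℂ f s := fun h => hs.not_ge h.meromorphicOrderAt_nonneg
    rw [← continuousWithinAt_compl_self, ContinuousWithinAt, Function.comp_apply,
      toSphere_of_not_analyticAt hna]
    exact (tendsto_stereoInv_coe_cobounded.comp
      (tendsto_cobounded_of_meromorphicOrderAt_neg hs)).congr'
      (hf.toSphere_eventuallyEq.fun_comp stereoInv).symm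

lemma MeromorphicAt.exists_tendsto_stereoInv_toSphere {f : ℂ → ℂ} {s : ℂ}
    (hf : MeromorphicAt f s) (hs : 0 ≤ meromorphicOrderAt f s) :
    ∃ L ≠ stereoInv ∞, Tendsto (stereoInv ∘ toSphere f) (𝓝[≠] s) (𝓝 L) := by
  obtain ⟨c, hc⟩ := tendsto_nhds_of_meromorphicOrderAt_nonneg hf hs
  exact ⟨stereoInv c, stereoInv_coe_ne_infty c,
    ((lipschitzWith_stereoInv_coe.continuous.tendsto c).comp hc).congr'
      (hf.toSphere_eventuallyEq.fun_comp stereoInv).symm⟩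

lemma one_add_mul_conj_ne_zero {z w : ℂ} (hz : ‖z‖ < 1) (hw : ‖w‖ < 1) :
    1 + z * conj w ≠ 0 := by
  intro h
  have : ‖z * conj w‖ < 1 := by
    rw [norm_mul, Complex.norm_conj]
    nlinarith [norm_nonneg z, norm_nonneg w]
  rw [eq_neg_of_add_eq_zero_right h, norm_neg, norm_one] at this
  exact lt_irrefl _ this

lemma normSq_one_add_mul_conj_sub_normSq_add (z w : ℂ) :
    normSq (1 + z * conj w) - normSq (z + w) = (1 - normSq z) * (1 - normSq w) := by
  simp only [normSq_apply, add_re, add_im, mul_re, mul_im, conj_re, conj_im, one_re, one_im]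
  ring

lemma norm_phiM_lt_one {w z : ℂ} (hw : ‖w‖ < 1) (hz : ‖z‖ < 1) : ‖phiM w z‖ < 1 := by
  rw [phiM, norm_div, div_lt_one (norm_pos_iff.2 (one_add_mul_conj_ne_zero hz hw)),
    ← sq_lt_sq₀ (norm_nonneg _) (norm_nonneg _), Complex.sq_norm, Complex.sq_norm, ← sub_pos,
    normSq_one_add_mul_conj_sub_normSq_add, ← Complex.sq_norm, ← Complex.sq_norm]
  apply mul_pos <;> nlinarith [norm_nonneg z, norm_nonneg w]

lemma mapsTo_phiM {w : ℂ} (hw : ‖w‖ < 1) : MapsTo (phiM w) unitDisc unitDisc := fun _ hz =>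
  norm_phiM_lt_one hw hz

lemma dph_eq_norm_phiM_neg (z w : ℂ) : dph z w = ‖phiM (-w) z‖ := by
  simp only [dph, phiM, map_neg, mul_neg, ← sub_eq_add_neg]

lemma phiM_phiM_neg {w z : ℂ} (hw : ‖w‖ < 1) (hz : ‖z‖ < 1) : phiM w (phiM (-w) z) = z := by
  have hw' : ‖-w‖ < 1 := by rwa [norm_neg]
  have hx : phiM (-w) z * (1 + z * conj (-w)) = z + -w :=
    div_mul_cancel₀ _ (one_add_mul_conj_ne_zero hz hw')
  rw [phiM, div_eq_iff (one_add_mul_conj_ne_zero (norm_phiM_lt_one hw' hz) hw)]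
  rw [map_neg] at hx
  linear_combination hx

lemma eq_of_phiM_eq_phiM {v v' z : ℂ} (hv : ‖v‖ < 1) (hv' : ‖v'‖ < 1) (hz : ‖z‖ < 1)
    (h : phiM v z = phiM v' z) : v = v' := by
  set s := phiM v z with hs
  have e : z + v = s * (1 + z * conj v) :=
    (div_eq_iff (one_add_mul_conj_ne_zero hz hv)).1 hs.symm
  have e' : z + v' = s * (1 + z * conj v') :=
    (div_eq_iff (one_add_mul_conj_ne_zero hz hv')).1 h.symm
  have hdiff : v - v' = s * z * conj (v - v') := by rw [map_sub]; linear_combination e - e'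
  have hsz : ‖s * z‖ < 1 := by
    rw [norm_mul]; nlinarith [norm_nonneg s, norm_nonneg z, norm_phiM_lt_one hv hz]
  have hnorm : ‖v - v'‖ = ‖s * z‖ * ‖v - v'‖ := by
    conv_lhs => rw [hdiff]
    rw [norm_mul, Complex.norm_conj]
  rw [← sub_eq_zero, ← norm_eq_zero]
  nlinarith [norm_nonneg (v - v')]

lemma continuousAt_phiM {w z : ℂ} (hw : ‖w‖ < 1) (hz : ‖z‖ < 1) :
    ContinuousAt (fun p : ℂ × ℂ => phiM p.1 p.2) (w, z) :=
  ContinuousAt.div (by fun_prop) (by fun_prop) (one_add_mul_conj_ne_zero hz hw)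

lemma continuousOn_phiM {w : ℂ} (hw : ‖w‖ < 1) : ContinuousOn (phiM w) unitDisc := fun _ hz =>
  ((continuousAt_phiM hw hz).comp (continuousAt_const.prodMk continuousAt_id)).continuousWithinAt

lemma Filter.Tendsto.phiM {ι : Type*} {l : Filter ι} {a b : ι → ℂ} {w z : ℂ}
    (ha : Tendsto a l (𝓝 w)) (hb : Tendsto b l (𝓝 z)) (hw : ‖w‖ < 1) (hz : ‖z‖ < 1) :
    Tendsto (fun n => phiM (a n) (b n)) l (𝓝 (phiM w z)) :=
  (continuousAt_phiM hw hz).tendsto.comp (ha.prodMk_nhds hb)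

lemma tendsto_phiM_phiM_neg {v : ℕ → ℂ} {w s : ℂ} (hv : Tendsto v atTop (𝓝[≠] w))
    (hvD : ∀ n, ‖v n‖ < 1) (hw : ‖w‖ < 1) (hs : ‖s‖ < 1) :
    Tendsto (fun n => phiM w (phiM (-v n) s)) atTop (𝓝[≠] s) := by
  have hw' : ‖-w‖ < 1 := by rwa [norm_neg]
  refine tendsto_nhdsWithin_iff.2 ⟨?_, ?_⟩
  · simpa only [phiM_phiM_neg hw hs] using tendsto_const_nhds.phiM
      ((tendsto_nhds_of_tendsto_nhdsWithin hv).neg.phiM tendsto_const_nhds hw' hs)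
      hw (norm_phiM_lt_one hw' hs)
  · filter_upwards [hv self_mem_nhdsWithin] with n hn heq
    exact hn (eq_of_phiM_eq_phiM (hvD n) hw (norm_phiM_lt_one (by rw [norm_neg]; exact hvD n) hs)
      ((phiM_phiM_neg (hvD n) hs).trans heq.symm))

def discAut (p : ℂ × ℂ) (z : ℂ) : ℂ := phiM p.2 (p.1 * z)

def transitionParam (u w : ℂ) : ℂ × ℂ := ((1 - w * conj u) / (1 - u * conj w), phiM (-w) u)

lemma transitionParam_mem {u w : ℂ} (hu : ‖u‖ < 1) (hw : ‖w‖ < 1) {r : ℝ} (h : dph u w ≤ r) :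
    transitionParam u w ∈ Metric.sphere 0 1 ×ˢ Metric.closedBall 0 r := by
  refine ⟨?_, by simpa [transitionParam, dph_eq_norm_phiM_neg] using h⟩
  have hd := one_add_mul_conj_ne_zero hu (w := -w) (by rwa [norm_neg])
  rw [map_neg, mul_neg, ← sub_eq_add_neg] at hd
  rw [mem_sphere_zero_iff_norm, transitionParam, norm_div,
    div_eq_one_iff_eq (norm_ne_zero_iff.2 hd), ← Complex.norm_conj]
  simp [mul_comm]

lemma phiM_eq_phiM_discAut {u w z : ℂ} (hu : ‖u‖ < 1) (hw : ‖w‖ < 1) (hz : ‖z‖ < 1) :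
    phiM u z = phiM w (discAut (transitionParam u w) z) := by
  have hw' : ‖-w‖ < 1 := by rwa [norm_neg]
  have hB : ‖(transitionParam u w).2‖ < 1 := norm_phiM_lt_one hw' hu
  have hrz : ‖(transitionParam u w).1 * z‖ < 1 := by
    rwa [norm_mul, mem_sphere_zero_iff_norm.1 (transitionParam_mem hu hw le_rfl).1, one_mul]
  have hd := one_add_mul_conj_ne_zero hu hw'
  have hd' := one_add_mul_conj_ne_zero hw (w := -u) (by rwa [norm_neg])
  simp only [map_neg, mul_neg, ← sub_eq_add_neg] at hd hd'
  set ζ := discAut (transitionParam u w) z with hζdef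
  have hζD : ‖ζ‖ < 1 := norm_phiM_lt_one hB hrz
  have hζ : ζ * ((conj u - conj w) * z + (1 - u * conj w)) = (1 - w * conj u) * z + (u - w) := by
    rw [hζdef, discAut, phiM, div_mul_eq_mul_div, div_eq_iff (one_add_mul_conj_ne_zero hrz hB)]
    simp only [transitionParam, phiM, map_neg, mul_neg, ← sub_eq_add_neg, map_div₀, map_sub,
      map_one, map_mul, conj_conj]
    field_simp
    ring
  rw [phiM, phiM, div_eq_div_iff (one_add_mul_conj_ne_zero hz hu)
    (one_add_mul_conj_ne_zero hζD hw)]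
  linear_combination -hζ

lemma continuousOn_discAut {S : Set (ℂ × ℂ)} (hS : ∀ p ∈ S, ‖p.1‖ ≤ 1 ∧ ‖p.2‖ < 1) :
    ContinuousOn (Function.uncurry discAut) (S ×ˢ unitDisc) := by
  rintro ⟨p, z⟩ ⟨hp, hz⟩
  have hpz : ‖p.1 * z‖ < 1 := by
    rw [norm_mul]; nlinarith [norm_nonneg p.1, norm_nonneg z, (hS p hp).1, show ‖z‖ < 1 from hz]
  have hinner : ContinuousAt (fun q : (ℂ × ℂ) × ℂ => (q.1.2, q.1.1 * q.2)) (p, z) := by fun_prop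
  exact (ContinuousAt.comp (g := fun q : ℂ × ℂ => phiM q.1 q.2) (x := (p, z))
    (continuousAt_phiM (hS p hp).2 hpz) hinner).continuousWithinAt

lemma mapsTo_discAut {S : Set (ℂ × ℂ)} (hS : ∀ p ∈ S, ‖p.1‖ ≤ 1 ∧ ‖p.2‖ < 1) :
    MapsTo (Function.uncurry discAut) (S ×ˢ unitDisc) unitDisc := by
  rintro ⟨p, z⟩ ⟨hp, hz⟩
  refine norm_phiM_lt_one (hS p hp).2 ?_
  rw [norm_mul]
  nlinarith [norm_nonneg p.1, norm_nonneg z, (hS p hp).1, show ‖z‖ < 1 from hz]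

lemma normalAlong_iff {F : ℂ → OnePoint ℂ} {γ U : Set ℂ} :
    NormalAlong F γ U ↔ ∀ w : ℕ → ℂ, (∀ n, w n ∈ γ) → ∃ φ : ℕ → ℕ, StrictMono φ ∧
      ∃ h : ℂ → OnePoint ℂ, ∀ K ⊆ U, IsCompact K → TendstoUniformlyOn
        (fun n z => stereoInv (F (phiM (w (φ n)) z))) (stereoInv ∘ h) atTop K := by
  simp only [NormalAlong, Metric.tendstoUniformlyOn_iff, eventually_atTop, sphDist_eq_dist,
    Function.comp_apply]
  simp only [dist_comm]

lemma NormalAlong.of_subset_Delta {F : ℂ → OnePoint ℂ}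
    (hF : ContinuousOn (stereoInv ∘ F) unitDisc) {γ γ₁ : Set ℂ} (hγ : γ ⊆ unitDisc) {r : ℝ}
    (hr : r < 1) (hsub : γ₁ ⊆ Delta r γ) (hN : NormalAlong F γ unitDisc) :
    NormalAlong F γ₁ unitDisc := by
  rw [normalAlong_iff] at hN ⊢
  intro u hu
  have hmem : ∀ n, u n ∈ unitDisc ∧ ∃ w ∈ γ, dph (u n) w ≤ r := fun n => by
    simpa [Delta] using hsub (hu n)
  choose w hwγ hdph using fun n => (hmem n).2
  have huD : ∀ n, ‖u n‖ < 1 := fun n => (hmem n).1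
  have hwD : ∀ n, ‖w n‖ < 1 := fun n => hγ (hwγ n)
  obtain ⟨σ₁, hσ₁, h, hconv⟩ := hN w hwγ
  set S : Set (ℂ × ℂ) := Metric.sphere 0 1 ×ˢ Metric.closedBall 0 r
  have hS : ∀ q ∈ S, ‖q.1‖ ≤ 1 ∧ ‖q.2‖ < 1 := fun q hq =>
    ⟨(mem_sphere_zero_iff_norm.1 hq.1).le, (mem_closedBall_zero_iff.1 hq.2).trans_lt hr⟩
  set p : ℕ → ℂ × ℂ := fun n => transitionParam (u n) (w n)
  have hpS : ∀ n, p n ∈ S := fun n => transitionParam_mem (huD n) (hwD n) (hdph n)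
  have hScpt : IsCompact S := (isCompact_sphere 0 1).prod (isCompact_closedBall 0 r)
  obtain ⟨q, hqS, σ₂, hσ₂, hpq⟩ := hScpt.tendsto_subseq fun n => hpS (σ₁ n)
  refine ⟨σ₁ ∘ σ₂, hσ₁.comp hσ₂, h ∘ discAut q, fun K hKD hK => ?_⟩
  set K' := Function.uncurry discAut '' (S ×ˢ K)
  have hΨ : ContinuousOn (Function.uncurry discAut) (S ×ˢ K) :=
    (continuousOn_discAut hS).mono (prod_mono subset_rfl hKD)
  have hK'D : K' ⊆ unitDisc :=
    ((mapsTo_discAut hS).mono_left (prod_mono subset_rfl hKD)).image_subset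
  have hG := hconv K' hK'D ((hScpt.prod hK).image_of_continuousOn hΨ)
  have hh : ContinuousOn (stereoInv ∘ h) K' := hG.continuousOn <| Frequently.of_forall fun n =>
    (hF.comp (continuousOn_phiM (hwD _)) (mapsTo_phiM (hwD _))).mono hK'D
  have hlim := tendstoUniformlyOn_of_continuousOn_prod (f := fun a z => stereoInv (h (discAut a z)))
    hK (hh.comp hΨ (mapsTo_image _ _)) hqS
    (tendsto_nhdsWithin_iff.2 ⟨hpq, Eventually.of_forall fun n => hpS _⟩)
  refine (TendstoUniformlyOn.comp_of_mapsTo (fun v hv => hσ₂.tendsto_atTop.eventually (hG v hv))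
    (fun n z hz => mem_image_of_mem _ (mk_mem_prod (hpS (σ₁ (σ₂ n))) hz)) hlim).congr ?_
  refine Eventually.of_forall fun n z hz => ?_
  simp only [Function.comp_apply, Function.uncurry_apply_pair, p,
    ← phiM_eq_phiM_discAut (huD _) (hwD _) (hKD hz)]

lemma not_normalAlong_of_tendsto_ne {F : ℂ → OnePoint ℂ} {γ : Set ℂ} (hγ : γ ⊆ unitDisc)
    {v : ℕ → ℂ} {w : ℂ} (hvγ : ∀ n, v n ∈ γ) (hv : Tendsto v atTop (𝓝[≠] w)) (hw : ‖w‖ < 1)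
    {s : ℂ} (hs : ‖s‖ < 1) {L : EuclideanSpace ℝ (Fin 3)}
    (hL : Tendsto (stereoInv ∘ F) (𝓝[≠] s) (𝓝 L)) (hLs : L ≠ stereoInv (F s)) :
    ¬ NormalAlong F γ unitDisc := by
  rw [normalAlong_iff]
  intro hN
  obtain ⟨σ, hσ, h, hconv⟩ := hN v hvγ
  have hvσ : Tendsto (v ∘ σ) atTop (𝓝[≠] w) := hv.comp hσ.tendsto_atTop
  have hvD : ∀ n, ‖v (σ n)‖ < 1 := fun n => hγ (hvγ _)
  have hv' : Tendsto (fun n => v (σ n)) atTop (𝓝 w) := tendsto_nhds_of_tendsto_nhdsWithin hvσ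
  have hw' : ‖-w‖ < 1 := by rwa [norm_neg]
  -- `q m` is the point that `φ_{v (σ m)}` sends to `s`.
  set q : ℕ → ℂ := fun m => phiM (-v (σ m)) s
  have hqD : ∀ m, ‖q m‖ < 1 := fun m => norm_phiM_lt_one (by rw [norm_neg]; exact hvD m) hs
  have hq : Tendsto q atTop (𝓝 (phiM (-w) s)) := hv'.neg.phiM tendsto_const_nhds hw' hs
  set K := insert (phiM (-w) s) (range q)
  have hKD : K ⊆ unitDisc := by
    rintro _ (rfl | ⟨m, rfl⟩)
    exacts [norm_phiM_lt_one hw' hs, hqD m]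
  set ε := dist L (stereoInv (F s)) / 3 with hεdef
  have hε : 0 < ε := div_pos (dist_pos.2 hLs) three_pos
  obtain ⟨N, hNε⟩ := eventually_atTop.1
    (Metric.tendstoUniformlyOn_iff.1 (hconv K hKD hq.isCompact_insert_range) ε hε)
  obtain ⟨O, hO, hsO, hOL⟩ := mem_nhdsWithin.1 (Metric.tendsto_nhds.1 hL ε hε)
  obtain ⟨m, hmO, hmN⟩ := (((tendsto_phiM_phiM_neg hvσ hvD hw hs).eventually
    (mem_nhdsWithin.2 ⟨O, hO, hsO, subset_rfl⟩)).and (eventually_ge_atTop N)).exists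
  have hx : Tendsto (fun n => phiM (v (σ n)) (q m)) atTop (𝓝 (phiM w (q m))) :=
    hv'.phiM tendsto_const_nhds hw (hqD m)
  obtain ⟨n, hnO, hnN⟩ := ((hx.eventually_mem ((hO.inter isOpen_compl_singleton).mem_nhds hmO)).and
    (eventually_ge_atTop N)).exists
  have hqmK : q m ∈ K := mem_insert_of_mem _ (mem_range_self m)
  have e₁ : dist (stereoInv (F (phiM (v (σ n)) (q m)))) L < ε := hOL hnO
  have e₂ := hNε n hnN (q m) hqmK
  have e₃ := hNε m hmN (q m) hqmK
  rw [Function.comp_apply, phiM_phiM_neg (hvD m) hs] at e₃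
  rw [Function.comp_apply] at e₂
  have := dist_triangle4 L (stereoInv (F (phiM (v (σ n)) (q m)))) (stereoInv (h (q m)))
    (stereoInv (F s))
  rw [dist_comm] at e₁ e₂
  linarith

lemma subset_Delta {γ : Set ℂ} (hγ : γ ⊆ unitDisc) {r : ℝ} (hr : 0 ≤ r) : γ ⊆ Delta r γ :=
  fun z hz => mem_biUnion hz ⟨hγ hz, by simpa [dph] using hr⟩

lemma SimpleCurve.carrier_subset_unitDisc {p : ℂ} (γ : SimpleCurve p) : γ.carrier ⊆ unitDisc := by
  rintro _ ⟨t, ht, rfl⟩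
  exact γ.inDisc t ht

lemma SimpleCurve.exists_tendsto_nhdsNE {p : ℂ} (γ : SimpleCurve p) :
    ∃ v : ℕ → ℂ, (∀ n, v n ∈ γ.carrier) ∧ Tendsto v atTop (𝓝[≠] γ.toFun 0) := by
  set t : ℕ → ℝ := fun n => (1 / 2) ^ (n + 1)
  have ht : ∀ n, t n ∈ Ioo 0 1 := fun n =>
    ⟨by positivity, pow_lt_one₀ (by norm_num) (by norm_num) n.succ_ne_zero⟩
  have hIco : ∀ n, t n ∈ Ico 0 1 := fun n => Ioo_subset_Ico_self (ht n)
  have h0 : (0 : ℝ) ∈ Ico 0 1 := ⟨le_rfl, one_pos⟩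
  have hlim : Tendsto t atTop (𝓝[Ico 0 1] 0) := tendsto_nhdsWithin_iff.2
    ⟨(tendsto_pow_atTop_nhds_zero_of_lt_one (by norm_num) (by norm_num)).comp
      (tendsto_add_atTop_nat 1), Eventually.of_forall hIco⟩
  refine ⟨γ.toFun ∘ t, fun n => mem_image_of_mem _ (hIco n), tendsto_nhdsWithin_iff.2
    ⟨(γ.cont 0 h0).tendsto.comp hlim, Eventually.of_forall fun n heq => (ht n).1.ne' ?_⟩⟩
  exact γ.inj (hIco n) h0 heq

theorem stmt_13 (θ : ℝ) (γ : SimpleCurve (Complex.exp (θ * Complex.I)))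
    (f : ℂ → ℂ) (hf : MeromorphicOn f unitDisc) :
    NormalAlong (toSphere f) γ.carrier unitDisc ↔
      ∀ γ₁ : SimpleCurve (Complex.exp (θ * Complex.I)),
        (∃ r : ℝ, 0 < r ∧ r < 1 ∧ γ₁.carrier ⊆ Delta r γ.carrier) →
        NormalAlong (toSphere f) γ₁.carrier unitDisc := by
  refine ⟨fun hN γ₁ ⟨r, _, hr, hsub⟩ => ?_, fun h => h γ ⟨1 / 2, by norm_num, by norm_num,
    subset_Delta γ.carrier_subset_unitDisc (by norm_num)⟩⟩
  by_cases hrem : ∃ s ∈ unitDisc, ¬ AnalyticAt ℂ f s ∧ 0 ≤ meromorphicOrderAt f s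
  · obtain ⟨s, hs, hna, hord⟩ := hrem
    obtain ⟨L, hL, hlim⟩ := (hf s hs).exists_tendsto_stereoInv_toSphere hord
    obtain ⟨v, hvγ, hv⟩ := γ.exists_tendsto_nhdsNE
    exact absurd hN (not_normalAlong_of_tendsto_ne γ.carrier_subset_unitDisc hvγ hv
      (γ.inDisc 0 ⟨le_rfl, one_pos⟩) hs hlim (by rwa [toSphere_of_not_analyticAt hna]))
  · push Not at hrem
    refine hN.of_subset_Delta (fun s hs => ?_) γ.carrier_subset_unitDisc hr hsub
    exact ((hf s hs).continuousAt_stereoInv_toSphere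
      ((em _).imp_right (hrem s hs))).continuousWithinAt

end
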